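/- arXiv:2011.02633 — 7 statements merged into one kernel-verified Lean document; each statement's English description precedes it below -/
import Mathlib

section
/- The topological product of an arbitrary family of ω-narrow topological gyrogroups, with the coordinatewise operation and the product topology, is an ω-narrow topological gyrogroup. -/
universe u v

/-- A gyrogroup: a set with a binary operation `add`, a (unique) two-sided identity `zero`,
(unique) two-sided inverses `neg`, and gyroautomorphisms `gyr x y` satisfying the left
gyroassociative law and the left loop property. -/
class Gyrogroup (G : Type u) where
  add : G → G → G
  zero : G
  neg : G → G
  gyr : G → G → G → G
  zero_add : ∀ a : G, add zero a = a
  add_zero : ∀ a : G, add a zero = a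
  zero_unique : ∀ z : G, (∀ a : G, add z a = a ∧ add a z = a) → z = zero
  neg_add : ∀ a : G, add (neg a) a = zero
  add_neg : ∀ a : G, add a (neg a) = zero
  neg_unique : ∀ x y : G, add y x = zero → add x y = zero → y = neg x
  gyr_bijective : ∀ x y : G, Function.Bijective (gyr x y)
  gyr_add : ∀ x y a b : G, gyr x y (add a b) = add (gyr x y a) (gyr x y b)
  gyr_assoc : ∀ x y z : G, add x (add y z) = add (add x y) (gyr x y z)
  gyr_left_loop : ∀ x y : G, gyr (add x y) y = gyr x y

/-- A topological gyrogroup: a gyrogroup with a Hausdorff topology making the operation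
jointly continuous and the inversion continuous. -/
def IsTopologicalGyrogroup (G : Type u) [TopologicalSpace G] [Gyrogroup G] : Prop :=
  T2Space G ∧ Continuous (fun p : G × G => Gyrogroup.add p.1 p.2) ∧
    Continuous (Gyrogroup.neg : G → G)

/-- A strongly topological gyrogroup: a topological gyrogroup admitting a neighborhood
base `𝒰` at `0` each member of which is invariant under all gyrations. -/
def IsStronglyTopologicalGyrogroup (G : Type u) [TopologicalSpace G] [Gyrogroup G] : Prop :=
  IsTopologicalGyrogroup G ∧
    ∃ 𝒰 : Set (Set G),
      (∀ U ∈ 𝒰, U ∈ nhds (Gyrogroup.zero : G)) ∧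
      (∀ V ∈ nhds (Gyrogroup.zero : G), ∃ U ∈ 𝒰, U ⊆ V) ∧
      (∀ U ∈ 𝒰, ∀ x y : G, Gyrogroup.gyr x y '' U = U)

/-- Left ω-narrow: every open neighborhood `V` of `0` satisfies `G = A ⊕ V`
for some countable `A`. -/
def LeftOmegaNarrow (G : Type u) [TopologicalSpace G] [Gyrogroup G] : Prop :=
  ∀ V : Set G, IsOpen V → (Gyrogroup.zero : G) ∈ V →
    ∃ A : Set G, A.Countable ∧ Set.image2 Gyrogroup.add A V = Set.univ

/-- Right ω-narrow: every open neighborhood `V` of `0` satisfies `G = V ⊕ A`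
for some countable `A`. -/
def RightOmegaNarrow (G : Type u) [TopologicalSpace G] [Gyrogroup G] : Prop :=
  ∀ V : Set G, IsOpen V → (Gyrogroup.zero : G) ∈ V →
    ∃ A : Set G, A.Countable ∧ Set.image2 Gyrogroup.add V A = Set.univ

/-- ω-narrow: both left and right ω-narrow. -/
def OmegaNarrow (G : Type u) [TopologicalSpace G] [Gyrogroup G] : Prop :=
  LeftOmegaNarrow G ∧ RightOmegaNarrow G

/-- A subgyrogroup: a nonempty subset forming a gyrogroup under the inherited operation,
the restriction of each `gyr a b` (for `a b ∈ H`) being an automorphism of `H`. -/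
structure IsSubgyrogroup (G : Type u) [Gyrogroup G] (H : Set G) : Prop where
  nonempty : H.Nonempty
  zero_mem : (Gyrogroup.zero : G) ∈ H
  add_mem : ∀ a ∈ H, ∀ b ∈ H, Gyrogroup.add a b ∈ H
  neg_mem : ∀ a ∈ H, Gyrogroup.neg a ∈ H
  gyr_image : ∀ a ∈ H, ∀ b ∈ H, Gyrogroup.gyr a b '' H = H

/-- An L-subgyrogroup: a subgyrogroup with `gyr a h (H) = H` for all `a ∈ G`, `h ∈ H`. -/
structure IsLSubgyrogroup (G : Type u) [Gyrogroup G] (H : Set G)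
    extends IsSubgyrogroup G H : Prop where
  gyr_image_L : ∀ a : G, ∀ h ∈ H, Gyrogroup.gyr a h '' H = H

/-- The left coset `a ⊕ H`. -/
def lcoset {G : Type u} [Gyrogroup G] (a : G) (H : Set G) : Set G :=
  (fun h => Gyrogroup.add a h) '' H

/-- The equivalence relation identifying points with the same left coset of `H`;
for an L-subgyrogroup the cosets partition `G` and the quotient is the coset space `G/H`,
which carries the quotient topology. -/
def cosetSetoid {G : Type u} [Gyrogroup G] (H : Set G) : Setoid G :=
  ⟨fun a b => lcoset a H = lcoset b H, ⟨fun _ => rfl, Eq.symm, Eq.trans⟩⟩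

/-- A topological space is feathered if it contains a nonempty compact subset of
countable character. -/
def Feathered (X : Type u) [TopologicalSpace X] : Prop :=
  ∃ K : Set X, K.Nonempty ∧ IsCompact K ∧
    ∃ 𝒞 : Set (Set X), 𝒞.Countable ∧
      (∀ U ∈ 𝒞, IsOpen U ∧ K ⊆ U) ∧
      (∀ W : Set X, IsOpen W → K ⊆ W → ∃ U ∈ 𝒞, U ⊆ W)

/-- The product of a family of gyrogroups, with the coordinatewise operation. -/
instance Gyrogroup.instPi {ι : Type u} {G : ι → Type v} [∀ i, Gyrogroup (G i)] :
    Gyrogroup (∀ i, G i) where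
  add f g i := Gyrogroup.add (f i) (g i)
  zero i := Gyrogroup.zero
  neg f i := Gyrogroup.neg (f i)
  gyr f g h i := Gyrogroup.gyr (f i) (g i) (h i)
  zero_add a := funext fun i => Gyrogroup.zero_add (a i)
  add_zero a := funext fun i => Gyrogroup.add_zero (a i)
  zero_unique z hz := by
    funext i
    have h := congrFun ((hz fun _ => Gyrogroup.zero).1) i
    simpa [Gyrogroup.add_zero] using h
  neg_add a := funext fun i => Gyrogroup.neg_add (a i)
  add_neg a := funext fun i => Gyrogroup.add_neg (a i)
  neg_unique x y h1 h2 := funext fun i =>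
    Gyrogroup.neg_unique (x i) (y i) (congrFun h1 i) (congrFun h2 i)
  gyr_bijective x y := by
    constructor
    · intro f g hfg
      funext i
      exact (Gyrogroup.gyr_bijective (x i) (y i)).1 (congrFun hfg i)
    · intro h
      choose g hg using fun i => (Gyrogroup.gyr_bijective (x i) (y i)).2 (h i)
      exact ⟨g, funext hg⟩
  gyr_add x y a b := funext fun i => Gyrogroup.gyr_add (x i) (y i) (a i) (b i)
  gyr_assoc x y z := funext fun i => Gyrogroup.gyr_assoc (x i) (y i) (z i)
  gyr_left_loop x y := funext fun z => funext fun i =>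
    congrFun (Gyrogroup.gyr_left_loop (x i) (y i)) (z i)


/-- The topological product of an arbitrary family of ω-narrow topological
gyrogroups, with the coordinatewise operation and the product topology, is an ω-narrow
topological gyrogroup. -/
theorem pi_omegaNarrow {ι : Type u} {G : ι → Type v}
    [∀ i, TopologicalSpace (G i)] [∀ i, Gyrogroup (G i)]
    (hG : ∀ i, IsTopologicalGyrogroup (G i)) (hn : ∀ i, OmegaNarrow (G i)) :
    IsTopologicalGyrogroup (∀ i, G i) ∧ OmegaNarrow (∀ i, G i) := by
  classical
  haveI : ∀ i, T2Space (G i) := fun i => (hG i).1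
  refine ⟨⟨inferInstance, ?_, ?_⟩, ?_, ?_⟩
  · exact continuous_pi fun i => (hG i).2.1.comp
      (((continuous_apply i).comp continuous_fst).prodMk
        ((continuous_apply i).comp continuous_snd))
  · exact continuous_pi fun i => (hG i).2.2.comp (continuous_apply i)
  · -- left ω-narrow
    intro V hV h0V
    obtain ⟨I, u, hu, hsub⟩ := isOpen_pi_iff.1 hV _ h0V
    choose A hAc hAcov using fun i (hi : i ∈ I) =>
      (hn i).1 (u i) (hu i hi).1 (hu i hi).2
    set e : (∀ i : I, G i) → (∀ i, G i) := fun h i =>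
      if hi : i ∈ I then h ⟨i, hi⟩ else Gyrogroup.zero with he
    refine ⟨e '' (Set.pi Set.univ fun i : I => A i i.2), ?_, ?_⟩
    · exact (Set.countable_univ_pi fun i : I => hAc i i.2).image e
    · apply Set.eq_univ_of_forall
      intro g
      have hx : ∀ i : I, ∃ a ∈ A i i.2, ∃ v ∈ u i, Gyrogroup.add a v = g i := by
        intro i
        have := (hAcov i i.2).symm ▸ Set.mem_univ (g i)
        simpa [Set.mem_image2] using this
      choose a ha v hv hav using hx
      refine Set.mem_image2.2 ⟨e a, ⟨a, fun i _ => ha i, rfl⟩,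
        (fun i => if hi : i ∈ I then v ⟨i, hi⟩ else g i), hsub ?_, ?_⟩
      · intro i hi
        replace hi : i ∈ I := hi
        simp only [dif_pos hi]
        exact hv ⟨i, hi⟩
      · funext i
        show Gyrogroup.add (e a i) (if hi : i ∈ I then v ⟨i, hi⟩ else g i) = g i
        by_cases hi : i ∈ I
        · simp only [he, dif_pos hi]
          exact hav ⟨i, hi⟩
        · simp only [he, dif_neg hi]
          exact Gyrogroup.zero_add (g i)
  · -- right ω-narrow
    intro V hV h0V
    obtain ⟨I, u, hu, hsub⟩ := isOpen_pi_iff.1 hV _ h0V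
    choose A hAc hAcov using fun i (hi : i ∈ I) =>
      (hn i).2 (u i) (hu i hi).1 (hu i hi).2
    set e : (∀ i : I, G i) → (∀ i, G i) := fun h i =>
      if hi : i ∈ I then h ⟨i, hi⟩ else Gyrogroup.zero with he
    refine ⟨e '' (Set.pi Set.univ fun i : I => A i i.2), ?_, ?_⟩
    · exact (Set.countable_univ_pi fun i : I => hAc i i.2).image e
    · apply Set.eq_univ_of_forall
      intro g
      have hx : ∀ i : I, ∃ v ∈ u i, ∃ a ∈ A i i.2, Gyrogroup.add v a = g i := by
        intro i
        have := (hAcov i i.2).symm ▸ Set.mem_univ (g i)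
        simpa [Set.mem_image2] using this
      choose v hv a ha hav using hx
      refine Set.mem_image2.2 ⟨(fun i => if hi : i ∈ I then v ⟨i, hi⟩ else g i), hsub ?_,
        e a, ⟨a, fun i _ => ha i, rfl⟩, ?_⟩
      · intro i hi
        replace hi : i ∈ I := hi
        simp only [dif_pos hi]
        exact hv ⟨i, hi⟩
      · funext i
        show Gyrogroup.add (if hi : i ∈ I then v ⟨i, hi⟩ else g i) (e a i) = g i
        by_cases hi : i ∈ I
        · simp only [he, dif_pos hi]
          exact hav ⟨i, hi⟩
        · simp only [he, dif_neg hi]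
          exact Gyrogroup.add_zero (g i)
end

section
/- Let G be a strongly topological gyrogroup with a symmetric neighborhood base 𝒰 at 0. If G contains a dense subgyrogroup H such that H is left ω-narrow (in the subspace topology), then G is left ω-narrow. -/
universe u v

namespace GyroAux

open Gyrogroup

variable {G : Type u} [Gyrogroup G]

lemma gyr_neg_self_zero (x : G) : gyr (neg x) x (zero : G) = zero := by
  have h := gyr_assoc (neg x) x (zero : G)
  rw [Gyrogroup.add_zero, Gyrogroup.neg_add, Gyrogroup.zero_add] at h
  exact h.symm

lemma eq_zero_of_idem {z : G} (hz : add z z = z) : z = zero := by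
  have h := gyr_assoc (neg z) z z
  rw [hz, Gyrogroup.neg_add, Gyrogroup.zero_add] at h
  exact (gyr_bijective (neg z) z).1 (h.symm.trans (gyr_neg_self_zero z).symm)

lemma gyr_zero (x y : G) : gyr x y (zero : G) = zero := by
  apply eq_zero_of_idem
  rw [← gyr_add, Gyrogroup.zero_add]

lemma gyr_id_left (x z : G) : gyr (zero : G) x z = z := by
  have h1 := gyr_assoc (zero : G) x z
  rw [Gyrogroup.zero_add, Gyrogroup.zero_add] at h1
  have hloop := gyr_left_loop (neg x) x
  rw [Gyrogroup.neg_add] at hloop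
  have h2 := gyr_assoc (neg x) x z
  have h3 := gyr_assoc (neg x) x (gyr (zero : G) x z)
  rw [Gyrogroup.neg_add, Gyrogroup.zero_add] at h2 h3
  have h4 : gyr (neg x) x z = gyr (neg x) x (gyr (zero : G) x z) := by
    rw [← h2, ← h3, h1]
  exact ((gyr_bijective (neg x) x).1 h4).symm

lemma gyr_neg_self (x z : G) : gyr (neg x) x z = z := by
  have hloop := gyr_left_loop (neg x) x
  rw [Gyrogroup.neg_add] at hloop
  rw [← hloop]
  exact gyr_id_left x z

lemma gyr_self_neg (x z : G) : gyr x (neg x) z = z := by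
  have hloop := gyr_left_loop x (neg x)
  rw [Gyrogroup.add_neg] at hloop
  rw [← hloop]
  exact gyr_id_left (neg x) z

lemma neg_add_cancel_left (x y : G) : add (neg x) (add x y) = y := by
  rw [gyr_assoc, Gyrogroup.neg_add, Gyrogroup.zero_add, gyr_neg_self]

lemma add_neg_cancel_left (x y : G) : add x (add (neg x) y) = y := by
  rw [gyr_assoc, Gyrogroup.add_neg, Gyrogroup.zero_add, gyr_self_neg]

end GyroAux

/-- A strongly topological gyrogroup with a symmetric neighborhood base at `0`
containing a dense left ω-narrow subgyrogroup is left ω-narrow. -/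
theorem leftOmegaNarrow_of_dense_subgyrogroup {G : Type u} [TopologicalSpace G] [Gyrogroup G]
    (hG : IsTopologicalGyrogroup G)
    (𝒰 : Set (Set G))
    (h𝒰nhds : ∀ U ∈ 𝒰, U ∈ nhds (Gyrogroup.zero : G))
    (h𝒰base : ∀ V ∈ nhds (Gyrogroup.zero : G), ∃ U ∈ 𝒰, U ⊆ V)
    (h𝒰gyr : ∀ U ∈ 𝒰, ∀ x y : G, Gyrogroup.gyr x y '' U = U)
    (h𝒰sym : ∀ U ∈ 𝒰, Gyrogroup.neg '' U = U)
    (H : Set G) (hsub : IsSubgyrogroup G H) (hdense : Dense H)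
    (hHnarrow : ∀ V : Set G, IsOpen V → (Gyrogroup.zero : G) ∈ V →
      ∃ A : Set G, A ⊆ H ∧ A.Countable ∧ H = Set.image2 Gyrogroup.add A (V ∩ H)) :
    LeftOmegaNarrow G := by
  classical
  obtain ⟨hT2, haddc, hnegc⟩ := hG
  intro V hVopen hV0
  have hLcont : ∀ x : G, Continuous (fun y : G => Gyrogroup.add x y) :=
    fun x => haddc.comp (continuous_const.prodMk continuous_id)
  have hVnhds : V ∈ nhds (Gyrogroup.add (Gyrogroup.zero : G) (Gyrogroup.zero : G)) := by
    rw [Gyrogroup.zero_add]; exact hVopen.mem_nhds hV0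
  have hpre := (haddc.continuousAt (x := ((Gyrogroup.zero : G), (Gyrogroup.zero : G)))).preimage_mem_nhds hVnhds
  rw [mem_nhds_prod_iff] at hpre
  obtain ⟨W₁, hW₁, W₂, hW₂, hWsub⟩ := hpre
  obtain ⟨U, hU𝒰, hUsub⟩ := h𝒰base (W₁ ∩ W₂) (Filter.inter_mem hW₁ hW₂)
  have hUadd : ∀ u ∈ U, ∀ v ∈ U, Gyrogroup.add u v ∈ V := fun u hu v hv =>
    hWsub (Set.mk_mem_prod (hUsub hu).1 (hUsub hv).2)
  set V₀ := interior U with hV₀def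
  have h0V₀ : (Gyrogroup.zero : G) ∈ V₀ := mem_interior_iff_mem_nhds.mpr (h𝒰nhds U hU𝒰)
  obtain ⟨A, hAH, hAc, hHeq⟩ := hHnarrow V₀ isOpen_interior h0V₀
  refine ⟨A, hAc, ?_⟩
  rw [Set.eq_univ_iff_forall]
  intro x
  have himg : (fun y => Gyrogroup.add x y) '' V₀ =
      (fun z => Gyrogroup.add (Gyrogroup.neg x) z) ⁻¹' V₀ := by
    ext z
    constructor
    · rintro ⟨u, hu, rfl⟩
      simpa [GyroAux.neg_add_cancel_left] using hu
    · intro hz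
      exact ⟨_, hz, GyroAux.add_neg_cancel_left x z⟩
  have hOopen : IsOpen ((fun y => Gyrogroup.add x y) '' V₀) := by
    rw [himg]; exact isOpen_interior.preimage (hLcont _)
  have hOne : ((fun y => Gyrogroup.add x y) '' V₀).Nonempty := ⟨_, ⟨_, h0V₀, rfl⟩⟩
  obtain ⟨p, hpO, hpH⟩ := hdense.inter_open_nonempty _ hOopen hOne
  obtain ⟨u, huV₀, hpu⟩ := hpO
  have huU : u ∈ U := interior_subset huV₀
  have hnegu : Gyrogroup.neg u ∈ U := by
    rw [← h𝒰sym U hU𝒰]; exact ⟨u, huU, rfl⟩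
  have hwU : Gyrogroup.gyr x u (Gyrogroup.neg u) ∈ U := by
    rw [← h𝒰gyr U hU𝒰 x u]; exact ⟨_, hnegu, rfl⟩
  have hxpw : Gyrogroup.add p (Gyrogroup.gyr x u (Gyrogroup.neg u)) = x := by
    rw [← hpu, ← Gyrogroup.gyr_assoc, Gyrogroup.add_neg, Gyrogroup.add_zero]
  have hpmem : p ∈ Set.image2 Gyrogroup.add A (V₀ ∩ H) := hHeq ▸ hpH
  obtain ⟨a, haA, v, hv, hpav⟩ := hpmem
  have hvU : v ∈ U := interior_subset hv.1
  obtain ⟨z, hz⟩ := (Gyrogroup.gyr_bijective a v).2 (Gyrogroup.gyr x u (Gyrogroup.neg u))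
  have hzU : z ∈ U := by
    have hmem : Gyrogroup.gyr a v z ∈ Gyrogroup.gyr a v '' U := by
      rw [h𝒰gyr U hU𝒰 a v, hz]; exact hwU
    obtain ⟨u', hu', hu'eq⟩ := hmem
    exact (Gyrogroup.gyr_bijective a v).1 hu'eq ▸ hu'
  have hvz : Gyrogroup.add v z ∈ V := hUadd v hvU z hzU
  have hxeq : Gyrogroup.add a (Gyrogroup.add v z) = x := by
    rw [Gyrogroup.gyr_assoc, hpav, hz]; exact hxpw
  have hmem2 : Gyrogroup.add a (Gyrogroup.add v z) ∈ Set.image2 Gyrogroup.add A V :=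
    Set.mem_image2_of_mem (f := Gyrogroup.add) haA hvz
  rwa [hxeq] at hmem2
end

section
/- The product G=∏_{n∈ω} Gₙ of countably many feathered topological gyrogroups, with the coordinatewise operation and the product topology, is a feathered topological gyrogroup. -/
universe u v

open Set


/-- Saturation step used in Wallace's theorem for countable products. -/
lemma saturation_open {G : ℕ → Type u} [∀ n, TopologicalSpace (G n)]
    (v : Set (∀ n, G n)) (hv : IsOpen v) (N : ℕ) :
    IsOpen {x : ∀ n, G n | ∃ y ∈ v, ∀ i < N, y i = x i} := by
  rw [isOpen_pi_iff]
  rintro x ⟨y, hyv, hxy⟩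
  obtain ⟨I, u, hIu, hsub⟩ := isOpen_pi_iff.1 hv y hyv
  refine ⟨I.filter (· < N), u, fun a ha => by
    rcases Finset.mem_filter.1 ha with ⟨haI, haN⟩
    exact ⟨(hIu a haI).1, (hxy a haN) ▸ (hIu a haI).2⟩, ?_⟩
  intro z hz
  classical
  refine ⟨fun i => if i < N then z i else y i, hsub fun a haI => ?_, fun i hi => by simp [hi]⟩
  by_cases haN : a < N
  · simpa [haN] using hz a (Finset.mem_coe.2 (Finset.mem_filter.mpr ⟨haI, haN⟩))
  · simpa [haN] using (hIu a haI).2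

/-- Wallace's theorem for `N`-cylindrical open sets in a countable product. -/
lemma cyl_wallace {G : ℕ → Type u} [∀ n, TopologicalSpace (G n)]
    (K : ∀ n, Set (G n)) (hKc : ∀ n, IsCompact (K n)) (hKne : ∀ n, (K n).Nonempty) :
    ∀ N : ℕ, ∀ W : Set (∀ n, G n), IsOpen W → Set.univ.pi K ⊆ W →
      (∀ x ∈ W, ∀ y : ∀ n, G n, (∀ i < N, y i = x i) → y ∈ W) →
      ∃ V : ∀ n, Set (G n), (∀ n, IsOpen (V n) ∧ K n ⊆ V n) ∧
        {x : ∀ n, G n | ∀ i < N, x i ∈ V i} ⊆ W := by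
  intro N
  induction N with
  | zero =>
    intro W hWo hKW hcyl
    have hx : (fun n => (hKne n).some) ∈ W := hKW (fun n _ => (hKne n).some_mem)
    exact ⟨fun _ => univ, fun n => ⟨isOpen_univ, subset_univ _⟩,
      fun y _ => hcyl _ hx y (by omega)⟩
  | succ N ih =>
    intro W hWo hKW hcyl
    classical
    -- tube lemma on G N × ∏ G
    have hS : IsOpen {p : G N × (∀ n, G n) | Function.update p.2 N p.1 ∈ W} :=
      hWo.preimage (continuous_snd.update N continuous_fst)
    have hKK : (K N) ×ˢ (Set.univ.pi K) ⊆
        {p : G N × (∀ n, G n) | Function.update p.2 N p.1 ∈ W} := by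
      rintro ⟨a, x⟩ ⟨ha, hx⟩
      refine hKW fun i _ => ?_
      by_cases hi : i = N
      · subst hi; simpa using ha
      · simp only [Function.update_of_ne hi]; exact hx i (mem_univ _)
    obtain ⟨u, v, huo, hvo, hKu, hKv, huv⟩ :=
      generalized_tube_lemma (hKc N) (isCompact_univ_pi hKc) hS hKK
    -- saturate v below N
    set v' : Set (∀ n, G n) := {x | ∃ y ∈ v, ∀ i < N, y i = x i} with hv'def
    have hv'o : IsOpen v' := saturation_open v hvo N
    have hKv' : Set.univ.pi K ⊆ v' := fun x hx => ⟨x, hKv hx, fun _ _ => rfl⟩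
    have hv'cyl : ∀ x ∈ v', ∀ y : ∀ n, G n, (∀ i < N, y i = x i) → y ∈ v' := by
      rintro x ⟨z, hzv, hzx⟩ y hyx
      exact ⟨z, hzv, fun i hi => (hzx i hi).trans (hyx i hi).symm⟩
    obtain ⟨V, hV, hVv'⟩ := ih v' hv'o hKv' hv'cyl
    refine ⟨Function.update V N u, fun n => ?_, ?_⟩
    · by_cases hn : n = N
      · subst hn; simp [huo, hKu]
      · simp [Function.update_of_ne hn, hV n]
    · intro x hx
      have hxv' : x ∈ v' := hVv' fun i hi => by
        have := hx i (by omega)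
        rwa [Function.update_of_ne (by omega)] at this
      obtain ⟨y, hyv, hyx⟩ := hxv'
      have hxu : x N ∈ u := by simpa using hx N (by omega)
      have hupd : Function.update y N (x N) ∈ W := huv (show ((x N, y) : G N × (∀ n, G n)) ∈ u ×ˢ v from ⟨hxu, hyv⟩)
      refine hcyl _ hupd x fun i hi => ?_
      by_cases hiN : i = N
      · subst hiN; simp
      · rw [Function.update_of_ne hiN]; exact (hyx i (by omega)).symm

/-- Wallace-type theorem: any open set containing a compact box in a countable product
contains a finite-support open box with open factors containing the compact factors. -/
lemma pi_wallace {G : ℕ → Type u} [∀ n, TopologicalSpace (G n)]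
    (K : ∀ n, Set (G n)) (hKc : ∀ n, IsCompact (K n)) (hKne : ∀ n, (K n).Nonempty)
    (W : Set (∀ n, G n)) (hWo : IsOpen W) (hKW : Set.univ.pi K ⊆ W) :
    ∃ (N : ℕ) (V : ∀ n, Set (G n)), (∀ n, IsOpen (V n) ∧ K n ⊆ V n) ∧
      {x : ∀ n, G n | ∀ i < N, x i ∈ V i} ⊆ W := by
  classical
  -- choose a basic box around each point of the compact box
  have hbox : ∀ x ∈ Set.univ.pi K, ∃ (I : Finset ℕ) (u : ∀ a, Set (G a)),
      (∀ a ∈ I, IsOpen (u a) ∧ x a ∈ u a) ∧ (I : Set ℕ).pi u ⊆ W :=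
    fun x hx => isOpen_pi_iff.1 hWo x (hKW hx)
  choose! I u hu hsub using hbox
  have hcover : ∀ x ∈ Set.univ.pi K,
      (I x : Set ℕ).pi (u x) ∈ nhds x := fun x hx =>
    ((isOpen_set_pi (I x).finite_toSet (fun a ha => (hu x hx a ha).1)).mem_nhds
      (fun a ha => (hu x hx a ha).2))
  obtain ⟨t, htK, htcov⟩ := (isCompact_univ_pi hKc).elim_nhds_subcover
    (fun x => (I x : Set ℕ).pi (u x)) hcover
  set N : ℕ := (t.sup fun x => (I x).sup id) + 1 with hN
  set W₁ : Set (∀ n, G n) := ⋃ x ∈ t, (I x : Set ℕ).pi (u x) with hW₁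
  have hW₁o : IsOpen W₁ := isOpen_biUnion fun x hx =>
    isOpen_set_pi (I x).finite_toSet (fun a ha => (hu x (htK x hx) a ha).1)
  have hKW₁ : Set.univ.pi K ⊆ W₁ := htcov
  have hW₁cyl : ∀ x ∈ W₁, ∀ y : ∀ n, G n, (∀ i < N, y i = x i) → y ∈ W₁ := by
    intro x hx y hyx
    obtain ⟨z, hz, hxz⟩ := mem_iUnion₂.1 hx
    refine mem_iUnion₂.2 ⟨z, hz, fun a ha => ?_⟩
    have haN : a < N := by
      have : a ≤ (t.sup fun x => (I x).sup id) :=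
        le_trans (Finset.le_sup (f := id) ha) (Finset.le_sup (f := fun x => (I x).sup id) hz)
      omega
    rw [hyx a haN]; exact hxz a ha
  obtain ⟨V, hV, hVW₁⟩ := cyl_wallace K hKc hKne N W₁ hW₁o hKW₁ hW₁cyl
  have hW₁W : W₁ ⊆ W := iUnion₂_subset fun z hz => hsub z (htK z hz)
  exact ⟨N, V, hV, hVW₁.trans hW₁W⟩

/-- The product of countably many feathered topological gyrogroups, with the
coordinatewise operation and the product topology, is a feathered topological gyrogroup. -/
theorem pi_feathered (G : ℕ → Type u)
    [∀ n, TopologicalSpace (G n)] [∀ n, Gyrogroup (G n)]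
    (hG : ∀ n, IsTopologicalGyrogroup (G n)) (hf : ∀ n, Feathered (G n)) :
    IsTopologicalGyrogroup (∀ n, G n) ∧ Feathered (∀ n, G n) := by
  classical
  constructor
  · refine ⟨?_, ?_, ?_⟩
    · haveI : ∀ n, T2Space (G n) := fun n => (hG n).1
      infer_instance
    · apply continuous_pi
      intro n
      exact ((hG n).2.1).comp
        (((continuous_apply n).comp continuous_fst).prodMk
          ((continuous_apply n).comp continuous_snd))
    · apply continuous_pi
      intro n
      exact ((hG n).2.2).comp (continuous_apply n)
  · choose K hKne hKc 𝒞 h𝒞ctble h𝒞mem h𝒞base using hf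
    have h𝒞ne : ∀ n, (𝒞 n).Nonempty := fun n => by
      obtain ⟨U, hU, -⟩ := h𝒞base n Set.univ isOpen_univ (Set.subset_univ _)
      exact ⟨U, hU⟩
    choose e he using fun n => (h𝒞ctble n).exists_eq_range (h𝒞ne n)
    have heo : ∀ n k, IsOpen (e n k) ∧ K n ⊆ e n k := fun n k =>
      h𝒞mem n _ (by rw [he n]; exact Set.mem_range_self k)
    have hebase : ∀ n, ∀ V : Set (G n), IsOpen V → K n ⊆ V → ∃ k, e n k ⊆ V := by
      intro n V hVo hKV
      obtain ⟨U, hU, hUV⟩ := h𝒞base n V hVo hKV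
      rw [he n] at hU
      obtain ⟨k, rfl⟩ := hU
      exact ⟨k, hUV⟩
    refine ⟨Set.univ.pi K, ⟨fun n => (hKne n).some, fun n _ => (hKne n).some_mem⟩,
      isCompact_univ_pi hKc, Set.range (fun p : (Σ N : ℕ, Fin N → ℕ) =>
        {x : ∀ n, G n | ∀ i : Fin p.1, x i ∈ e i (p.2 i)}), Set.countable_range _, ?_, ?_⟩
    · rintro U ⟨⟨N, f⟩, rfl⟩
      constructor
      · show IsOpen {x : ∀ n, G n | ∀ i : Fin N, x i ∈ e i (f i)}
        have heq : {x : ∀ n, G n | ∀ i : Fin N, x i ∈ e i (f i)} =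
            ⋂ i : Fin N, (fun x : ∀ n, G n => x i) ⁻¹' (e i (f i)) := by
          ext x; simp [Set.mem_iInter]
        rw [heq]
        exact isOpen_iInter_of_finite fun i =>
          (heo i (f i)).1.preimage (continuous_apply _)
      · intro x hx i
        exact (heo i (f i)).2 (hx i (Set.mem_univ _))
    · intro W hWo hKW
      obtain ⟨N, V, hV, hVW⟩ := pi_wallace K hKc hKne W hWo hKW
      choose k hk using fun i : Fin N => hebase i (V i) (hV i).1 (hV i).2
      refine ⟨_, ⟨⟨N, k⟩, rfl⟩, fun x hx => hVW fun i hi => ?_⟩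
      exact hk ⟨i, hi⟩ (hx ⟨i, hi⟩)
end

section
/- Let G be a left ω-narrow strongly topological gyrogroup with a symmetric open neighborhood base 𝒰 at 0. If G is first-countable, then G has a countable base (i.e., G is second-countable). -/
universe u v

section Aux

open Gyrogroup

variable {G : Type u} [Gyrogroup G]

lemma Gyrogroup.add_left_cancel' {a x y : G} (h : add a x = add a y) : x = y := by
  have h1 : add (neg a) (add a x) = add (neg a) (add a y) := by rw [h]
  rw [gyr_assoc, gyr_assoc, neg_add, zero_add, zero_add] at h1
  exact (gyr_bijective (neg a) a).1 h1

lemma Gyrogroup.gyr_zero_left (a z : G) : gyr zero a z = z := by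
  have h := gyr_assoc (zero : G) a z
  rw [zero_add, zero_add] at h
  exact (Gyrogroup.add_left_cancel' h.symm)

lemma Gyrogroup.gyr_neg_self (a z : G) : gyr (neg a) a z = z := by
  have h := gyr_left_loop (neg a) a
  rw [neg_add] at h
  rw [← h, gyr_zero_left]

lemma Gyrogroup.gyr_self_neg (a z : G) : gyr a (neg a) z = z := by
  have h := gyr_left_loop a (neg a)
  rw [add_neg] at h
  rw [← h, gyr_zero_left]

lemma Gyrogroup.neg_add_cancel_left (a b : G) : add (neg a) (add a b) = b := by
  rw [gyr_assoc, neg_add, zero_add, gyr_neg_self]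

lemma Gyrogroup.add_neg_cancel_left (a b : G) : add a (add (neg a) b) = b := by
  rw [gyr_assoc, add_neg, zero_add, gyr_self_neg]

lemma lcoset_eq_preimage (a : G) (U : Set G) :
    lcoset a U = (fun y => add (neg a) y) ⁻¹' U := by
  ext y
  constructor
  · rintro ⟨u, hu, rfl⟩
    simpa [Gyrogroup.neg_add_cancel_left] using hu
  · intro hy
    exact ⟨add (neg a) y, hy, Gyrogroup.add_neg_cancel_left a y⟩

end Aux

/-- A left ω-narrow strongly topological gyrogroup with a symmetric open
neighborhood base at `0` which is first-countable has a countable base. -/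
theorem secondCountable_of_firstCountable_leftOmegaNarrow {G : Type u}
    [TopologicalSpace G] [Gyrogroup G]
    (hG : IsTopologicalGyrogroup G)
    (𝒰 : Set (Set G))
    (h𝒰open : ∀ U ∈ 𝒰, IsOpen U ∧ (Gyrogroup.zero : G) ∈ U)
    (h𝒰base : ∀ V ∈ nhds (Gyrogroup.zero : G), ∃ U ∈ 𝒰, U ⊆ V)
    (h𝒰gyr : ∀ U ∈ 𝒰, ∀ x y : G, Gyrogroup.gyr x y '' U = U)
    (h𝒰sym : ∀ U ∈ 𝒰, Gyrogroup.neg '' U = U)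
    (hnarrow : LeftOmegaNarrow G)
    [FirstCountableTopology G] :
    SecondCountableTopology G := by
  classical
  obtain ⟨hT2, haddc, hnegc⟩ := hG
  -- countable antitone basis at 0
  obtain ⟨W, hW⟩ := (nhds (Gyrogroup.zero : G)).exists_antitone_basis
  choose U hU𝒰 hUW using fun n : ℕ => h𝒰base (W n) (hW.1.mem_of_mem trivial)
  have hUopen : ∀ n, IsOpen (U n) := fun n => (h𝒰open _ (hU𝒰 n)).1
  have hUzero : ∀ n, (Gyrogroup.zero : G) ∈ U n := fun n => (h𝒰open _ (hU𝒰 n)).2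
  choose A hAcount hAcov using fun n : ℕ => hnarrow (U n) (hUopen n) (hUzero n)
  -- the candidate base
  set s : Set (Set G) := ⋃ n : ℕ, (fun a => lcoset a (U n)) '' (A n) with hs
  have hscount : s.Countable := Set.countable_iUnion fun n => (hAcount n).image _
  -- left translations are continuous
  have htrans : ∀ a : G, Continuous (fun y : G => Gyrogroup.add a y) := by
    intro a
    exact haddc.comp (continuous_const.prodMk continuous_id)
  have hsopen : ∀ t ∈ s, IsOpen t := by
    rintro t ht
    simp only [hs, Set.mem_iUnion, Set.mem_image] at ht
    obtain ⟨n, a, _, rfl⟩ := ht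
    rw [lcoset_eq_preimage]
    exact (hUopen n).preimage (htrans _)
  refine (TopologicalSpace.IsTopologicalBasis.secondCountableTopology
    (TopologicalSpace.isTopologicalBasis_of_isOpen_of_nhds hsopen ?_) hscount)
  intro x V hxV hVopen
  -- pull back V along left translation by x
  set W' : Set G := (fun y : G => Gyrogroup.add x y) ⁻¹' V with hW'
  have hW'nhds : W' ∈ nhds (Gyrogroup.zero : G) := by
    have h0 : (Gyrogroup.zero : G) ∈ W' := by
      simp only [hW', Set.mem_preimage, Gyrogroup.add_zero]
      exact hxV
    exact mem_nhds_iff.mpr ⟨W', le_refl _, hVopen.preimage (htrans x), h0⟩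
  -- find n with U n ⊕ U n ⊆ W'
  have hcont : ContinuousAt (fun p : G × G => Gyrogroup.add p.1 p.2)
      ((Gyrogroup.zero : G), (Gyrogroup.zero : G)) := haddc.continuousAt
  have hpre : (fun p : G × G => Gyrogroup.add p.1 p.2) ⁻¹' W' ∈
      nhds ((Gyrogroup.zero : G), (Gyrogroup.zero : G)) := by
    apply hcont.preimage_mem_nhds
    rwa [Gyrogroup.zero_add]
  rw [mem_nhds_prod_iff] at hpre
  obtain ⟨P, hP, Q, hQ, hPQ⟩ := hpre
  obtain ⟨n, -, hn⟩ := hW.1.mem_iff.mp (Filter.inter_mem hP hQ)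
  have hUn : U n ⊆ P ∩ Q := (hUW n).trans hn
  have haddmem : ∀ u ∈ U n, ∀ v ∈ U n, Gyrogroup.add u v ∈ W' := by
    intro u hu v hv
    exact hPQ (Set.mk_mem_prod (hUn hu).1 (hUn hv).2)
  -- cover: find a ∈ A n with x ∈ a ⊕ U n
  have hx : x ∈ Set.image2 Gyrogroup.add (A n) (U n) := by
    rw [hAcov n]; trivial
  obtain ⟨a, ha, v, hv, hav⟩ := hx
  refine ⟨lcoset a (U n), ?_, ⟨v, hv, hav⟩, ?_⟩
  · exact Set.mem_iUnion.mpr ⟨n, ⟨a, ha, rfl⟩⟩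
  · rintro y ⟨u, hu, rfl⟩
    -- a ⊕ u = x ⊕ gyr a v (⊖v ⊕ u) ∈ x ⊕ W' ⊆ V
    have hnegv : Gyrogroup.neg v ∈ U n := by
      rw [← h𝒰sym (U n) (hU𝒰 n)]
      exact ⟨v, hv, rfl⟩
    have hg1 : Gyrogroup.gyr a v (Gyrogroup.neg v) ∈ U n := by
      rw [← h𝒰gyr (U n) (hU𝒰 n) a v]
      exact ⟨_, hnegv, rfl⟩
    have hg2 : Gyrogroup.gyr a v u ∈ U n := by
      rw [← h𝒰gyr (U n) (hU𝒰 n) a v]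
      exact ⟨_, hu, rfl⟩
    have hw : Gyrogroup.gyr a v (Gyrogroup.add (Gyrogroup.neg v) u) ∈ W' := by
      rw [Gyrogroup.gyr_add]
      exact haddmem _ hg1 _ hg2
    have key : Gyrogroup.add a u =
        Gyrogroup.add x (Gyrogroup.gyr a v (Gyrogroup.add (Gyrogroup.neg v) u)) := by
      rw [← hav, ← Gyrogroup.gyr_assoc, Gyrogroup.add_neg_cancel_left]
    show Gyrogroup.add a u ∈ V
    rw [key]
    exact hw
end

section
/- Let G be a topological gyrogroup and H a closed L-subgyrogroup of G. If the subspace H and the quotient space G/H are both separable, then G is separable. -/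
universe u v

/-- If `H` is a closed L-subgyrogroup of a topological gyrogroup `G` such that
the subspace `H` and the quotient space `G/H` are separable, then `G` is separable. -/
theorem separable_of_subgyrogroup_and_quotient_separable {G : Type u}
    [TopologicalSpace G] [Gyrogroup G]
    (hG : IsTopologicalGyrogroup G)
    (H : Set G) (hH : IsLSubgyrogroup G H) (hclosed : IsClosed H)
    (hHsep : TopologicalSpace.SeparableSpace ↥H)
    (hQsep : TopologicalSpace.SeparableSpace (Quotient (cosetSetoid H))) :
    TopologicalSpace.SeparableSpace G := by
  classical
  obtain ⟨_, hcont, _⟩ := hG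
  set s : Setoid G := cosetSetoid H with hs
  -- countable dense subsets
  obtain ⟨C, Ccount, Cdense⟩ := TopologicalSpace.exists_countable_dense (↥H)
  obtain ⟨Q, Qcount, Qdense⟩ := TopologicalSpace.exists_countable_dense (Quotient s)
  set D : Set G := Subtype.val '' C with hD
  set S : Set G := Set.image2 Gyrogroup.add (Quotient.out '' Q) D with hS
  refine ⟨⟨S, (Qcount.image _).image2 (Ccount.image _) _, dense_iff_inter_open.2 ?_⟩⟩
  intro U hU ⟨x, hxU⟩
  -- right translations are continuous
  have hRt : ∀ h : G, Continuous (fun y : G => Gyrogroup.add y h) := fun h =>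
    hcont.comp (continuous_id.prodMk continuous_const)
  have hLt : ∀ a : G, Continuous (fun y : G => Gyrogroup.add a y) := fun a =>
    hcont.comp (continuous_const.prodMk continuous_id)
  -- the saturation of U
  set W : Set G := {y : G | ∃ h ∈ H, Gyrogroup.add y h ∈ U} with hW
  have hWopen : IsOpen W := by
    have : W = ⋃ h ∈ H, (fun y : G => Gyrogroup.add y h) ⁻¹' U := by
      ext y; simp [hW]
    rw [this]
    exact isOpen_biUnion fun h _ => hU.preimage (hRt h)
  -- W is saturated
  have hsat : ∀ z w : G, lcoset z H = lcoset w H → w ∈ W → z ∈ W := by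
    intro z w hzw ⟨h, hh, hu⟩
    have : Gyrogroup.add w h ∈ lcoset z H := hzw ▸ ⟨h, hh, rfl⟩
    obtain ⟨h', hh', heq⟩ := this
    refine ⟨h', hh', ?_⟩
    rw [show Gyrogroup.add z h' = Gyrogroup.add w h from heq]
    exact hu
  have hpre : Quotient.mk s ⁻¹' (Quotient.mk s '' W) = W := by
    ext z
    constructor
    · rintro ⟨w, hw, hmk⟩
      exact hsat z w (Quotient.exact hmk.symm) hw
    · intro hz; exact ⟨z, hz, rfl⟩
  have hOopen : IsOpen (Quotient.mk s '' W) := by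
    refine isOpen_coinduced.mpr ?_
    show IsOpen (Quotient.mk s ⁻¹' (Quotient.mk s '' W))
    rw [hpre]; exact hWopen
  have hxW : x ∈ W := ⟨Gyrogroup.zero, hH.zero_mem, by rw [Gyrogroup.add_zero]; exact hxU⟩
  -- a point of Q in the image of W
  obtain ⟨q, ⟨w, hwW, hmkw⟩, hqQ⟩ :=
    Qdense.inter_open_nonempty _ hOopen ⟨Quotient.mk s x, x, hxW, rfl⟩
  have houtW : Quotient.out q ∈ W := by
    have h1 : Quotient.mk s (Quotient.out q) = Quotient.mk s w := by
      rw [q.out_eq]; exact hmkw.symm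
    exact hsat _ w (Quotient.exact h1) hwW
  obtain ⟨h, hh, hu⟩ := houtW
  -- use density of C in H
  set V : Set ↥H := Subtype.val ⁻¹' ((fun y : G => Gyrogroup.add (Quotient.out q) y) ⁻¹' U)
    with hV
  have hVopen : IsOpen V := ((hU.preimage (hLt _)).preimage continuous_subtype_val)
  obtain ⟨c, hcV, hcC⟩ := Cdense.inter_open_nonempty V hVopen ⟨⟨h, hh⟩, hu⟩
  refine ⟨Gyrogroup.add (Quotient.out q) c.val, hcV, ?_⟩
  exact Set.mem_image2_of_mem ⟨q, hqQ, rfl⟩ ⟨c, hcC, rfl⟩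
end

section
/- Every left ω-narrow feathered strongly topological gyrogroup is Lindelöf. -/
universe u v

/-!
Translate the compact set `K` of countable character so that `0 ∈ K`, and let `(sₙ)` be a
countable base of neighbourhoods of `K`. Given an open cover `𝒱`, each translate `x ⊕ K` is covered by
finitely many members of `𝒱`, and so is some `x ⊕ s_{c(x)}`. Since `G` is strongly
topological, every `sₙ` contains a gyration-invariant neighbourhood `P` of `0`, and for a small
enough neighbourhood `V` of `0` the identity `(a ⊕ w) ⊕ gyr[a,w](⊖w ⊕ v) = a ⊕ v` puts all of
`a ⊕ V` into `(a ⊕ w) ⊕ sₙ` for every `w ∈ V`. Left ω-narrowness covers `G` by countably many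
sets `a ⊕ V`, so choosing one `x` per index `n` and per such set yields countably many translates
`x ⊕ s_{c(x)}` covering `G`, hence a countable subcover of `𝒱`.
-/

open Filter Set Topology

theorem Feathered.exists_isCountablyGenerated_nhdsSet {X : Type u} [TopologicalSpace X]
    (h : Feathered X) :
    ∃ K : Set X, K.Nonempty ∧ IsCompact K ∧ (𝓝ˢ K).IsCountablyGenerated := by
  obtain ⟨K, hKne, hK, 𝒞, h𝒞, h𝒞K, h𝒞base⟩ := h
  have hbasis : (𝓝ˢ K).HasBasis (· ∈ 𝒞) id :=
    (hasBasis_nhdsSet K).to_hasBasis (fun W hW => h𝒞base W hW.1 hW.2)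
      fun U hU => ⟨U, h𝒞K U hU, subset_rfl⟩
  exact ⟨K, hKne, hK, HasCountableBasis.isCountablyGenerated ⟨hbasis, h𝒞⟩⟩

theorem IsCompact.exists_basis_subset_finite_subcover {X ι κ : Type*} [TopologicalSpace X]
    {K : Set X} (hK : IsCompact K) {p : κ → Prop} {s : κ → Set X}
    (hs : (𝓝ˢ K).HasBasis p s) {U : ι → Set X} (hU : ∀ i, IsOpen (U i))
    (hKU : K ⊆ ⋃ i, U i) :
    ∃ j, p j ∧ ∃ t : Finset ι, s j ⊆ ⋃ i ∈ t, U i := by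
  obtain ⟨t, ht⟩ := hK.elim_finite_subcover U hU hKU
  obtain ⟨j, hj, hjt⟩ := hs.mem_iff.1 ((isOpen_biUnion fun i _ => hU i).mem_nhdsSet.2 ht)
  exact ⟨j, hj, t, hjt⟩

namespace Gyrogroup

variable {G : Type u} [Gyrogroup G]

theorem gyr_neg_add_self_apply (a b : G) :
    add (neg a) (add a b) = gyr (neg a) a b := by
  rw [gyr_assoc, neg_add, zero_add]

theorem add_left_cancel {a b c : G} (h : add a b = add a c) : b = c :=
  (gyr_bijective (neg a) a).1 <| by
    rw [← gyr_neg_add_self_apply, ← gyr_neg_add_self_apply, h]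

theorem gyr_zero_left_s14 (a b : G) : gyr zero a b = b :=
  add_left_cancel (a := a) <| by
    simpa only [Gyrogroup.zero_add] using (gyr_assoc zero a b).symm

theorem neg_add_cancel_left_s14 (a b : G) : add (neg a) (add a b) = b := by
  rw [gyr_neg_add_self_apply, ← gyr_left_loop, neg_add, gyr_zero_left_s14]

theorem add_neg_cancel_left_s14 (a b : G) : add a (add (neg a) b) = b := by
  rw [gyr_assoc, add_neg, Gyrogroup.zero_add, ← gyr_left_loop, add_neg, gyr_zero_left_s14]

variable [TopologicalSpace G]

theorem continuous_add_left (hadd : Continuous fun p : G × G => add p.1 p.2) (a : G) :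
    Continuous (add a) :=
  hadd.comp (continuous_const.prodMk continuous_id)

def addLeftHomeomorph (hadd : Continuous fun p : G × G => add p.1 p.2) (a : G) : G ≃ₜ G where
  toFun := add a
  invFun := add (neg a)
  left_inv := neg_add_cancel_left_s14 a
  right_inv := add_neg_cancel_left_s14 a
  continuous_toFun := continuous_add_left hadd a
  continuous_invFun := continuous_add_left hadd (neg a)

theorem exists_zero_mem_isCompact_isCountablyGenerated_nhdsSet
    (hadd : Continuous fun p : G × G => add p.1 p.2) (h : Feathered G) :
    ∃ K : Set G, zero ∈ K ∧ IsCompact K ∧ (𝓝ˢ K).IsCountablyGenerated := by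
  obtain ⟨K, ⟨k, hk⟩, hK, hKcg⟩ := h.exists_isCountablyGenerated_nhdsSet
  let e := addLeftHomeomorph hadd (neg k)
  refine ⟨e '' K, ⟨k, hk, neg_add k⟩, hK.image e.continuous, ?_⟩
  rw [← e.isOpenMap.map_nhdsSet_eq e.continuous]
  infer_instance

theorem exists_isOpen_lcoset_subset_lcoset (hG : IsStronglyTopologicalGyrogroup G) {C : Set G}
    (hC : C ∈ 𝓝 zero) :
    ∃ V : Set G, IsOpen V ∧ zero ∈ V ∧
      ∀ a : G, ∀ w ∈ V, lcoset a V ⊆ lcoset (add a w) C := by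
  obtain ⟨⟨-, hadd, hneg⟩, 𝒰, h𝒰, h𝒰base, h𝒰gyr⟩ := hG
  obtain ⟨P, hP𝒰, hPC⟩ := h𝒰base C hC
  have hsub : Tendsto (fun p : G × G => add (neg p.1) p.2) (𝓝 (zero, zero)) (𝓝 zero) := by
    simpa only [Function.comp_def, Prod.map_fst, Prod.map_snd, id, neg_add] using
      (hadd.comp (hneg.prodMap continuous_id)).tendsto (zero, zero)
  have hpre : (fun p : G × G => add (neg p.1) p.2) ⁻¹' P ∈ 𝓝 zero ×ˢ 𝓝 zero := by
    rw [← nhds_prod_eq]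
    exact hsub (h𝒰 P hP𝒰)
  obtain ⟨W, hW, hWP⟩ := mem_prod_self_iff.1 hpre
  refine ⟨interior W, isOpen_interior, mem_interior_iff_mem_nhds.2 hW, ?_⟩
  rintro a w hw _ ⟨v, hv, rfl⟩
  refine ⟨gyr a w (add (neg w) v), hPC ?_, ?_⟩
  · rw [← h𝒰gyr P hP𝒰 a w]
    exact mem_image_of_mem _ (hWP (mk_mem_prod (interior_subset hw) (interior_subset hv)))
  · change add (add a w) _ = add a v
    rw [← gyr_assoc, add_neg_cancel_left_s14]

theorem _root_.LeftOmegaNarrow.exists_countable_lcoset_cover (hG : LeftOmegaNarrow G)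
    {ι : Type*} [Countable ι] {s : ι → Set G}
    (hs : ∀ i, ∃ V : Set G, IsOpen V ∧ zero ∈ V ∧
      ∀ a : G, ∀ w ∈ V, lcoset a V ⊆ lcoset (add a w) (s i))
    (c : G → ι) :
    ∃ D : Set G, D.Countable ∧ ∀ y : G, ∃ x ∈ D, y ∈ lcoset x (s (c x)) := by
  choose V hVo hV0 hV using hs
  choose A hA hAV using fun i => hG (V i) (hVo i) (hV0 i)
  have : Nonempty G := ⟨zero⟩
  let pick : ι → G → G := fun i a =>
    Classical.epsilon fun x => c x = i ∧ x ∈ lcoset a (V i)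
  refine ⟨⋃ i, ⋃ a ∈ A i, {pick i a},
    countable_iUnion fun i => (hA i).biUnion fun a _ => countable_singleton _, fun y => ?_⟩
  obtain ⟨a, ha, v, hv, hy⟩ : y ∈ image2 add (A (c y)) (V (c y)) := hAV _ ▸ mem_univ y
  obtain ⟨hc, w, hw, hw'⟩ : c (pick (c y) a) = c y ∧ pick (c y) a ∈ lcoset a (V (c y)) :=
    Classical.epsilon_spec (p := fun x => c x = c y ∧ x ∈ lcoset a (V (c y)))
      ⟨y, rfl, v, hv, hy⟩
  refine ⟨pick (c y) a, mem_iUnion_of_mem _ (mem_biUnion ha rfl), ?_⟩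
  rw [hc, ← hw']
  exact hV _ a w hw ⟨v, hv, hy⟩

end Gyrogroup

/-- Every left ω-narrow feathered strongly topological gyrogroup is
Lindelöf. -/
theorem lindelof_of_leftOmegaNarrow_feathered {G : Type u}
    [TopologicalSpace G] [Gyrogroup G]
    (hG : IsStronglyTopologicalGyrogroup G)
    (hnarrow : LeftOmegaNarrow G) (hfeathered : Feathered G) :
    LindelofSpace G := by
  obtain ⟨K, h0K, hK, hKcg⟩ :=
    Gyrogroup.exists_zero_mem_isCompact_isCountablyGenerated_nhdsSet hG.1.2.1 hfeathered
  obtain ⟨s, hs⟩ := (𝓝ˢ K).exists_antitone_basis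
  have hsmall := fun n => Gyrogroup.exists_isOpen_lcoset_subset_lcoset hG
    (mem_nhdsSet_iff_forall.1 (hs.mem n) _ h0K)
  refine ⟨isLindelof_of_countable_subcover fun U hU hcover => ?_⟩
  choose c _ t ht using fun x => hK.exists_basis_subset_finite_subcover hs.toHasBasis
    (U := fun i => Gyrogroup.add x ⁻¹' U i)
    (fun i => (hU i).preimage (Gyrogroup.continuous_add_left hG.1.2.1 x))
    fun z _ => by
      simpa only [mem_iUnion, mem_preimage] using hcover (mem_univ (Gyrogroup.add x z))
  obtain ⟨D, hD, hDcover⟩ := hnarrow.exists_countable_lcoset_cover hsmall c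
  refine ⟨⋃ x ∈ D, t x, hD.biUnion fun x _ => (t x).countable_toSet, fun y _ => ?_⟩
  obtain ⟨x, hxD, z, hz, rfl⟩ := hDcover y
  obtain ⟨i, hi, hzi⟩ := mem_iUnion₂.1 (ht x hz)
  exact mem_biUnion (mem_biUnion hxD hi) hzi
end

section
/- If a metrizable topological group G is topologically isomorphic to a subgroup of a separable Hausdorff topological group, then G is separable. -/
open Topology Filter Set Pointwise

universe u v

/-!
Pull a neighbourhood `U` of `1` in `G` back to a neighbourhood `V` of `1` in `X` with
`f⁻¹(V / V) ⊆ U`. For each point `d` of a countable dense subset of `X`, pick one `c` with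
`d ∈ f c • V` whenever such a `c` exists; for any `g`, some `d` lies in `f g • V`, and then
`f (g⁻¹ * c) ∈ V / V`, so `g⁻¹ * c ∈ U`. Thus countably many translates `c • U⁻¹` cover `G`,
and running over a countable neighbourhood basis of `1` yields a countable dense subset.
-/

section

variable {G X : Type*} [Group G] [Group X] [TopologicalSpace X] [IsTopologicalGroup X]
  [TopologicalSpace.SeparableSpace X]

theorem MonoidHom.exists_countable_forall_exists_map_inv_mul_mem_div (f : G →* X) {V : Set X}
    (hV : V ∈ 𝓝 (1 : X)) : ∃ C : Set G, C.Countable ∧ ∀ g, ∃ c ∈ C, f (g⁻¹ * c) ∈ V / V := by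
  classical
  obtain ⟨D, hD_count, hD_dense⟩ := TopologicalSpace.exists_countable_dense X
  let pick : X → G := fun d => if h : ∃ c, d ∈ f c • V then h.choose else 1
  refine ⟨pick '' D, hD_count.image pick, fun g => ?_⟩
  obtain ⟨d, hdD, v₁, hv₁, hd⟩ := hD_dense.inter_nhds_nonempty (smul_mem_nhds_self.2 hV :
    f g • V ∈ 𝓝 (f g))
  have hex : ∃ c, d ∈ f c • V := ⟨g, v₁, hv₁, hd⟩
  obtain ⟨v₂, hv₂, hpick⟩ : d ∈ f (pick d) • V := by
    simpa only [pick, dif_pos hex] using hex.choose_spec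
  refine ⟨pick d, mem_image_of_mem pick hdD, v₁, hv₁, v₂, hv₂, ?_⟩
  simp only [smul_eq_mul] at hd hpick
  rw [← hpick] at hd
  change v₁ / v₂ = f (g⁻¹ * pick d)
  rw [map_mul, map_inv, div_eq_iff_eq_mul, mul_assoc, eq_inv_mul_iff_mul_eq, hd]

variable [TopologicalSpace G]

theorem Topology.IsEmbedding.exists_countable_forall_exists_inv_mul_mem {f : G →* X}
    (hf : IsEmbedding f) {U : Set G} (hU : U ∈ 𝓝 (1 : G)) :
    ∃ C : Set G, C.Countable ∧ ∀ g, ∃ c ∈ C, g⁻¹ * c ∈ U := by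
  rw [hf.nhds_eq_comap, map_one] at hU
  obtain ⟨O, hO, hOU⟩ := mem_comap.1 hU
  obtain ⟨V, hV, hVO⟩ := exists_nhds_split_inv hO
  obtain ⟨C, hC, hcover⟩ := f.exists_countable_forall_exists_map_inv_mul_mem_div hV
  refine ⟨C, hC, fun g => ?_⟩
  obtain ⟨c, hc, v, hv, w, hw, hvw⟩ := hcover g
  exact ⟨c, hc, hOU (show f (g⁻¹ * c) ∈ O from hvw ▸ hVO v hv w hw)⟩

end

theorem TopologicalSpace.separableSpace_of_forall_exists_countable_inv_mul_mem {G : Type*}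
    [Group G] [TopologicalSpace G] [IsTopologicalGroup G] [FirstCountableTopology G]
    (h : ∀ U ∈ 𝓝 (1 : G), ∃ C : Set G, C.Countable ∧ ∀ g, ∃ c ∈ C, g⁻¹ * c ∈ U) :
    SeparableSpace G := by
  obtain ⟨U, hU⟩ := (𝓝 (1 : G)).exists_antitone_basis
  choose C hC_count hC_cover using fun n => h (U n) (hU.mem n)
  refine ⟨⟨⋃ n, C n, countable_iUnion hC_count, fun g => mem_closure_iff_nhds.2 fun N hN => ?_⟩⟩
  rw [← nhds_translation_inv_mul] at hN
  obtain ⟨t, ht, htN⟩ := mem_comap.1 hN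
  obtain ⟨n, -, hn⟩ := hU.toHasBasis.mem_iff.1 ht
  obtain ⟨c, hc, hgc⟩ := hC_cover n g
  exact ⟨c, htN (hn hgc), mem_iUnion_of_mem n hc⟩

theorem separable_of_metrizable_subgroup_of_separable_general {G : Type u}
    [Group G] [TopologicalSpace G] [IsTopologicalGroup G]
    [TopologicalSpace.MetrizableSpace G]
    {X : Type v} [Group X] [TopologicalSpace X] [IsTopologicalGroup X]
    [TopologicalSpace.SeparableSpace X]
    (f : G →* X) (hemb : Topology.IsEmbedding (⇑f)) :
    TopologicalSpace.SeparableSpace G :=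
  TopologicalSpace.separableSpace_of_forall_exists_countable_inv_mul_mem fun _ hU =>
    hemb.exists_countable_forall_exists_inv_mul_mem hU

/-- If a metrizable topological group `G` is topologically isomorphic to a
subgroup of a separable Hausdorff topological group `X` (i.e. there is a group homomorphism
`G →* X` which is a topological embedding), then `G` is separable. -/
theorem separable_of_metrizable_subgroup_of_separable {G : Type u}
    [Group G] [TopologicalSpace G] [IsTopologicalGroup G]
    [TopologicalSpace.MetrizableSpace G]
    {X : Type v} [Group X] [TopologicalSpace X] [IsTopologicalGroup X]
    [T2Space X] [TopologicalSpace.SeparableSpace X]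
    (f : G →* X) (hemb : Topology.IsEmbedding (⇑f)) :
    TopologicalSpace.SeparableSpace G :=
  separable_of_metrizable_subgroup_of_separable_general f hemb
end
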